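/- arXiv:1404.1689 — 3 statements merged into one kernel-verified Lean document; each statement's English description precedes it below -/
import Mathlib

section
/- If N and l are positive integers with 3N/4 < l < N, then there exist integers j ≥ 0 and q such that (N/l)·(j + 1/4) ≤ q ≤ (N/l)·(j + 3/4). -/
theorem stmt_4 (N l : ℕ) (h1 : 3 * N < 4 * l) (h2 : l < N) (hN : 0 < N) (hl : 0 < l) :
    ∃ j q : ℤ, 0 ≤ j ∧
      ((N : ℝ) / l) * ((j : ℝ) + 1 / 4) ≤ (q : ℝ) ∧
      (q : ℝ) ≤ ((N : ℝ) / l) * ((j : ℝ) + 3 / 4) := by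
  set d : ℕ := N - l with hd
  have hdpos : 0 < d := by omega
  have hNld : N = l + d := by omega
  have h3d : 3 * d < l := by omega
  set j : ℕ := (l + d - 1) / (4 * d) with hj
  -- key div facts
  have hub : 4 * d * j ≤ l + d - 1 := Nat.mul_div_le (l + d - 1) (4 * d)
  have hlb : l + d - 1 < 4 * d * j + 4 * d := by
    have := Nat.lt_mul_div_succ (l + d - 1) (show 0 < 4 * d by omega)
    rw [Nat.mul_add, Nat.mul_one] at this
    exact this
  have key1 : N * (4 * j + 1) ≤ 4 * l * (j + 1) := by
    have : 4 * d * j + d ≤ 3 * l := by omega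
    nlinarith [this]
  have key2 : 4 * l * (j + 1) ≤ N * (4 * j + 3) := by
    have : l ≤ 4 * d * j + 3 * d := by omega
    nlinarith [this]
  refine ⟨(j : ℤ), (j : ℤ) + 1, by positivity, ?_, ?_⟩
  · have hlpos : (0 : ℝ) < (l : ℝ) := by exact_mod_cast hl
    rw [div_mul_eq_mul_div, div_le_iff₀ hlpos]
    have c1 : (N : ℝ) * (4 * (j : ℝ) + 1) ≤ 4 * l * ((j : ℝ) + 1) := by
      exact_mod_cast key1
    push_cast
    nlinarith [c1]
  · have hlpos : (0 : ℝ) < (l : ℝ) := by exact_mod_cast hl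
    rw [div_mul_eq_mul_div, le_div_iff₀ hlpos]
    have c2 : 4 * (l : ℝ) * ((j : ℝ) + 1) ≤ (N : ℝ) * (4 * (j : ℝ) + 3) := by
      exact_mod_cast key2
    push_cast
    nlinarith [c2]
end

section
/- If N and l are positive integers with 3N < 4l < 4N, so that 0 < (N-l)/l < 1/3, then there exists a positive integer j such that 1/4 < j·(N-l)/l - ⌊j·(N-l)/l⌋ < 2/3. -/
theorem stmt_5 (N l : ℕ) (h1 : 3 * N < 4 * l) (h2 : l < N) (hl : 0 < l) :
    ∃ j : ℕ, 0 < j ∧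
      (1 : ℝ) / 4 < Int.fract ((j : ℝ) * ((N : ℝ) - l) / l) ∧
      Int.fract ((j : ℝ) * ((N : ℝ) - l) / l) < 2 / 3 := by
  classical
  set d := N - l with hd
  have hdpos : 0 < d := Nat.sub_pos_of_lt h2
  have h3d : 3 * d < l := by omega
  have hP : ∃ j, l < 4 * j * d := ⟨l + 1, by nlinarith⟩
  set j := Nat.find hP with hjdef
  have hj : l < 4 * j * d := Nat.find_spec hP
  have hj0 : 0 < j := by
    rcases Nat.eq_zero_or_pos j with h | h
    · rw [h] at hj; omega
    · exact h
  have hkey : 4 * j * d ≤ l + 4 * d := by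
    obtain ⟨k, hk⟩ : ∃ k, j = k + 1 := ⟨j - 1, by omega⟩
    have h' : ¬ (l < 4 * k * d) := Nat.find_min hP (by omega)
    calc 4 * j * d = 4 * k * d + 4 * d := by rw [hk]; ring
      _ ≤ l + 4 * d := by omega
  have h12 : 12 * (j * d) < 7 * l := by nlinarith
  have hcast : (N : ℝ) - l = (d : ℝ) := by
    rw [hd]; push_cast [Nat.cast_sub h2.le]; ring
  have hlR : (0 : ℝ) < l := by exact_mod_cast hl
  have hjU : (12 : ℝ) * ((j : ℝ) * d) < 7 * l := by exact_mod_cast h12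
  have hjL : (l : ℝ) < 4 * ((j : ℝ) * d) := by
    have : (l : ℝ) < 4 * j * d := by exact_mod_cast hj
    linarith [this]
  refine ⟨j, hj0, ?_, ?_⟩ <;> rw [hcast] <;>
    rw [Int.fract_eq_self.mpr ⟨by positivity, by rw [div_lt_one hlR]; linarith⟩]
  · rw [lt_div_iff₀ hlR]; linarith
  · rw [div_lt_iff₀ hlR]; linarith
end

section
/- Let N, l be positive integers with l < N, and let d be the smallest positive integer such that d ∤ (pN + l) for all integers p. Then d divides N and d does not divide l. -/
theorem stmt_12 (N l d : ℕ) (hl : 0 < l) (hlN : l < N)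
    (hd : IsLeast {d : ℕ | 0 < d ∧ ∀ p : ℤ, ¬ ((d : ℤ) ∣ p * N + l)} d) :
    d ∣ N ∧ ¬ d ∣ l := by
  obtain ⟨⟨hdpos, hprop⟩, hmin⟩ := hd
  have hndl : ¬ d ∣ l := by
    intro h
    exact hprop 0 (by simpa using (Int.natCast_dvd_natCast.mpr h))
  set g := Nat.gcd d N with hg
  have hgpos : 0 < g := Nat.gcd_pos_of_pos_left _ hdpos
  have hgnl : ¬ g ∣ l := by
    rintro ⟨k, hk⟩
    have hb : (g : ℤ) = d * Int.gcdA d N + N * Int.gcdB d N := by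
      simpa [hg, Int.gcd_natCast_natCast] using Int.gcd_eq_gcd_ab (d : ℤ) (N : ℤ)
    apply hprop (-(Int.gcdB d N * k))
    have hl' : (l : ℤ) = g * k := by exact_mod_cast hk
    refine ⟨Int.gcdA d N * k, ?_⟩
    rw [hl', hb]; ring
  have hd_le : d ≤ g := hmin ⟨hgpos, fun p hdvd => by
    have hgN : (g : ℤ) ∣ (N : ℤ) := Int.natCast_dvd_natCast.mpr (Nat.gcd_dvd_right d N)
    have : (g : ℤ) ∣ (l : ℤ) := by
      have := (Dvd.dvd.sub hdvd (hgN.mul_left p))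
      simpa using this
    exact hgnl (Int.natCast_dvd_natCast.mp this)⟩
  have hg_le : g ≤ d := Nat.le_of_dvd hdpos (Nat.gcd_dvd_left d N)
  have : d = g := le_antisymm hd_le hg_le
  exact ⟨this ▸ Nat.gcd_dvd_right d N, hndl⟩
end
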